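/- Let l > 0 and let φ : [0,l] → ℝ be continuously differentiable with φ(0) = φ(l) = 0. Then ∑_{k=1}^∞ |φ_k| ≤ (l/√6) (∫₀^l |φ'(x)|² dx)^{1/2}. -/

import Mathlib

/-!
Integrating by parts, `φ_k = ψ_k / λ_k`, where `ψ_k = √(2/l) ∫₀^l φ' cos (λ_k x) dx` are the
coefficients of `φ'` in the orthonormal system `√(2/l) cos (λ_k x)` of `L²(0,l)`. Cauchy–Schwarz
and Bessel's inequality give `∑ |φ_k| ≤ (∑ λ_k⁻²)^{1/2} ‖φ'‖₂`, and
`∑ λ_k⁻² = l² ζ(2) / π² = l² / 6`.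
-/

open Real Set MeasureTheory intervalIntegral
open scoped InnerProductSpace Interval

-- Indexed from `0`: `sineCoeff l φ k` is the paper's `φ_{k+1}`.
noncomputable def sineCoeff (l : ℝ) (φ : ℝ → ℝ) (k : ℕ) : ℝ :=
  √(2 / l) * ∫ x in (0:ℝ)..l, φ x * sin (π * ((k : ℝ) + 1) / l * x)

noncomputable def cosineCoeff (l : ℝ) (φ : ℝ → ℝ) (k : ℕ) : ℝ :=
  √(2 / l) * ∫ x in (0:ℝ)..l, φ x * cos (π * ((k : ℝ) + 1) / l * x)

theorem MeasureTheory.MemLp.inner_toLp_eq_integral_mul {α : Type*} [MeasurableSpace α]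
    {μ : Measure α} {f g : α → ℝ} (hf : MemLp f 2 μ) (hg : MemLp g 2 μ) :
    ⟪hf.toLp f, hg.toLp g⟫_ℝ = ∫ x, f x * g x ∂μ := by
  rw [L2.inner_def]
  refine integral_congr_ae ?_
  filter_upwards [hf.coeFn_toLp, hg.coeFn_toLp] with x hfx hgx
  rw [hfx, hgx, real_inner_eq_re_inner]
  simp [mul_comm]

theorem sum_sq_integral_mul_le_integral_sq_of_orthonormal {α ι : Type*} [MeasurableSpace α]
    {μ : Measure α} [DecidableEq ι] {e : ι → α → ℝ} (he : ∀ i, MemLp (e i) 2 μ)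
    (horth : ∀ i j, ∫ x, e i x * e j x ∂μ = if i = j then 1 else 0)
    {g : α → ℝ} (hg : MemLp g 2 μ) (s : Finset ι) :
    ∑ i ∈ s, (∫ x, e i x * g x ∂μ) ^ 2 ≤ ∫ x, g x ^ 2 ∂μ := by
  have hon : Orthonormal ℝ fun i => (he i).toLp (e i) :=
    orthonormal_iff_ite.2 fun i j => by rw [MemLp.inner_toLp_eq_integral_mul, horth]
  have bessel := hon.sum_inner_products_le (hg.toLp g) (s := s)
  rw [← real_inner_self_eq_norm_sq, MemLp.inner_toLp_eq_integral_mul] at bessel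
  simpa [MemLp.inner_toLp_eq_integral_mul, sq] using bessel

theorem ContinuousOn.memLp_restrict_Ioc {f : ℝ → ℝ} {a b : ℝ} (hf : ContinuousOn f (Icc a b))
    (p : ENNReal) : MemLp f p (volume.restrict (Ioc a b)) := by
  obtain ⟨C, hC⟩ := isCompact_Icc.exists_bound_of_continuousOn hf
  exact MemLp.of_bound ((hf.mono Ioc_subset_Icc_self).aestronglyMeasurable measurableSet_Ioc) C
    ((ae_restrict_iff' measurableSet_Ioc).2 (ae_of_all _ fun x hx => hC x (Ioc_subset_Icc_self hx)))

theorem integral_mul_sin_eq_inv_mul_integral_deriv_mul_cos {φ φ' : ℝ → ℝ} {a b : ℝ}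
    (hφ : ∀ x ∈ [[a, b]], HasDerivWithinAt φ (φ' x) [[a, b]] x)
    (hφ' : IntervalIntegrable φ' volume a b) (ha : φ a = 0) (hb : φ b = 0) (c : ℝ) :
    ∫ x in a..b, φ x * sin (c * x) = c⁻¹ * ∫ x in a..b, φ' x * cos (c * x) := by
  have hv (x : ℝ) : HasDerivAt (fun y => -c⁻¹ * cos (c * y)) (sin (c * x)) x := by
    rcases eq_or_ne c 0 with rfl | hc
    · simpa using hasDerivAt_const x (0 : ℝ)
    · refine (((hasDerivAt_id' x).const_mul c).cos.const_mul (-c⁻¹)).congr_deriv ?_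
      field_simp
  rw [integral_mul_deriv_eq_deriv_mul_of_hasDerivWithinAt hφ (fun x _ => (hv x).hasDerivWithinAt)
    hφ' (Continuous.intervalIntegrable (by fun_prop) a b), ha, hb]
  simp only [zero_mul, sub_self, zero_sub, mul_left_comm _ (-c⁻¹),
    intervalIntegral.integral_const_mul]
  ring

theorem integral_cos_pi_mul_int_div_mul_eq_zero (l : ℝ) {m : ℤ} (hm : m ≠ 0) :
    ∫ x in (0:ℝ)..l, cos (π * m / l * x) = 0 := by
  rcases eq_or_ne l 0 with rfl | hl
  · simp
  have hc : π * m / l ≠ 0 := by positivity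
  rw [integral_comp_mul_left (fun x => cos x) hc, integral_cos,
    show π * m / l * l = m * π by field_simp, sin_int_mul_pi]
  simp

theorem integral_cos_mul_cos (l : ℝ) (j k : ℕ) :
    ∫ x in (0:ℝ)..l, cos (π * ((j : ℝ) + 1) / l * x) * cos (π * ((k : ℝ) + 1) / l * x) =
      if j = k then l / 2 else 0 := by
  have hprod (x : ℝ) : cos (π * ((j : ℝ) + 1) / l * x) * cos (π * ((k : ℝ) + 1) / l * x) =
      cos (π * ((j - k : ℤ) : ℝ) / l * x) / 2 + cos (π * ((j + k + 2 : ℤ) : ℝ) / l * x) / 2 := by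
    set a := π * ((j : ℝ) + 1) / l * x
    set b := π * ((k : ℝ) + 1) / l * x
    push_cast
    rw [show π * ((j : ℝ) - k) / l * x = a - b by ring,
      show π * ((j : ℝ) + k + 2) / l * x = a + b by ring, cos_sub, cos_add]
    ring
  have hi (m : ℤ) : IntervalIntegrable (fun x => cos (π * m / l * x) / 2) volume 0 l :=
    Continuous.intervalIntegrable (by fun_prop) 0 l
  simp only [hprod]
  rw [integral_add (hi _) (hi _), intervalIntegral.integral_div, intervalIntegral.integral_div,
    integral_cos_pi_mul_int_div_mul_eq_zero l (m := j + k + 2) (by omega)]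
  split_ifs with hjk
  · subst hjk
    simp
  · rw [integral_cos_pi_mul_int_div_mul_eq_zero l (by omega)]
    simp

theorem sum_sq_cosineCoeff_le {l : ℝ} (hl : 0 < l) {g : ℝ → ℝ}
    (hg : MemLp g 2 (volume.restrict (Ioc 0 l))) (s : Finset ℕ) :
    ∑ k ∈ s, cosineCoeff l g k ^ 2 ≤ ∫ x in (0:ℝ)..l, g x ^ 2 := by
  let e (k : ℕ) (x : ℝ) : ℝ := √(2 / l) * cos (π * ((k : ℝ) + 1) / l * x)
  have he (k : ℕ) : MemLp (e k) 2 (volume.restrict (Ioc 0 l)) :=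
    (Continuous.continuousOn (by fun_prop)).memLp_restrict_Ioc 2
  have horth (j k : ℕ) : ∫ x in Ioc 0 l, e j x * e k x = if j = k then 1 else 0 := by
    have h2l : √(2 / l) * √(2 / l) = 2 / l := mul_self_sqrt (by positivity)
    simp only [e, mul_mul_mul_comm _ (cos _), h2l, ← integral_of_le hl.le,
      intervalIntegral.integral_const_mul, integral_cos_mul_cos]
    split_ifs
    · field_simp
    · simp
  have hcoeff (k : ℕ) : ∫ x in Ioc 0 l, e k x * g x = cosineCoeff l g k := by
    simp only [cosineCoeff, e, integral_of_le hl.le, ← MeasureTheory.integral_const_mul]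
    congr 1 with x
    ring
  simpa only [hcoeff, integral_of_le hl.le] using
    sum_sq_integral_mul_le_integral_sq_of_orthonormal he horth hg s

theorem sineCoeff_eq_mul_cosineCoeff {l : ℝ} {φ φ' : ℝ → ℝ}
    (hφ : ∀ x ∈ [[0, l]], HasDerivWithinAt φ (φ' x) [[0, l]] x)
    (hφ' : IntervalIntegrable φ' volume 0 l) (hφ0 : φ 0 = 0) (hφl : φ l = 0) (k : ℕ) :
    sineCoeff l φ k = l / (π * ((k : ℝ) + 1)) * cosineCoeff l φ' k := by
  rw [sineCoeff, cosineCoeff, integral_mul_sin_eq_inv_mul_integral_deriv_mul_cos hφ hφ' hφ0 hφl,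
    inv_div]
  ring

theorem sum_inv_succ_sq_le (s : Finset ℕ) : ∑ k ∈ s, 1 / ((k : ℝ) + 1) ^ 2 ≤ π ^ 2 / 6 := by
  have h := (hasSum_nat_add_iff' 1).2 hasSum_zeta_two
  simp only [Finset.range_one, Finset.sum_singleton, Nat.cast_zero, Nat.cast_add,
    Nat.cast_one] at h
  simpa using sum_le_hasSum s (fun k _ => by positivity) h

theorem sum_abs_sineCoeff_le {l : ℝ} (hl : 0 < l) {φ φ' : ℝ → ℝ}
    (hφ : ∀ x ∈ Icc 0 l, HasDerivWithinAt φ (φ' x) (Icc 0 l) x)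
    (hφ' : MemLp φ' 2 (volume.restrict (Ioc 0 l))) (hφ0 : φ 0 = 0) (hφl : φ l = 0)
    (s : Finset ℕ) :
    ∑ k ∈ s, |sineCoeff l φ k| ≤ l / √6 * √(∫ x in (0:ℝ)..l, φ' x ^ 2) := by
  have hφ'i : IntervalIntegrable φ' volume 0 l :=
    (intervalIntegrable_iff_integrableOn_Ioc_of_le hl.le).2 (hφ'.integrable one_le_two)
  have hweights : ∑ k ∈ s, (l / (π * ((k : ℝ) + 1))) ^ 2 ≤ l ^ 2 / 6 :=
    calc ∑ k ∈ s, (l / (π * ((k : ℝ) + 1))) ^ 2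
        = l ^ 2 / π ^ 2 * ∑ k ∈ s, 1 / ((k : ℝ) + 1) ^ 2 := by
          rw [Finset.mul_sum]
          congr 1 with k
          field_simp
      _ ≤ l ^ 2 / π ^ 2 * (π ^ 2 / 6) := by gcongr; exact sum_inv_succ_sq_le s
      _ = l ^ 2 / 6 := by field_simp
  calc ∑ k ∈ s, |sineCoeff l φ k|
      = ∑ k ∈ s, l / (π * ((k : ℝ) + 1)) * |cosineCoeff l φ' k| := by
        refine Finset.sum_congr rfl fun k _ => ?_
        rw [sineCoeff_eq_mul_cosineCoeff (by rwa [uIcc_of_le hl.le]) hφ'i hφ0 hφl, abs_mul,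
          abs_of_pos (by positivity)]
    _ ≤ √(∑ k ∈ s, (l / (π * ((k : ℝ) + 1))) ^ 2) * √(∑ k ∈ s, |cosineCoeff l φ' k| ^ 2) :=
        sum_mul_le_sqrt_mul_sqrt _ _ _
    _ ≤ √(l ^ 2 / 6) * √(∫ x in (0:ℝ)..l, φ' x ^ 2) := by
        simp only [sq_abs]
        gcongr
        exact sum_sq_cosineCoeff_le hl hφ' s
    _ = l / √6 * √(∫ x in (0:ℝ)..l, φ' x ^ 2) := by
        rw [sqrt_div' _ (by norm_num), sqrt_sq hl.le]

/-- Lemma 3.8 (second estimate): if `φ` is continuously differentiable on `[0,l]`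
with `φ(0) = φ(l) = 0`, then `∑_{k=1}^∞ |φ_k| ≤ (l/√6) ‖φ'‖_{L²(0,l)}`, where
`φ_k = √(2/l) ∫₀^l φ(x) sin(πkx/l) dx`. -/
theorem fourier_coeff_abs_sum_estimate (l : ℝ) (hl : 0 < l) (φ : ℝ → ℝ)
    (hφ : ContDiffOn ℝ 1 φ (Set.Icc 0 l)) (h0 : φ 0 = 0) (hle : φ l = 0) :
    Summable (fun k : ℕ =>
      |Real.sqrt (2 / l) * ∫ x in (0:ℝ)..l, φ x * Real.sin (π * ((k : ℝ) + 1) / l * x)|) ∧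
    (∑' k : ℕ,
        |Real.sqrt (2 / l) * ∫ x in (0:ℝ)..l, φ x * Real.sin (π * ((k : ℝ) + 1) / l * x)|)
      ≤ l / Real.sqrt 6 *
        Real.sqrt (∫ x in (0:ℝ)..l, (derivWithin φ (Set.Icc 0 l) x) ^ 2) := by
  have hderiv : ∀ x ∈ Icc 0 l, HasDerivWithinAt φ (derivWithin φ (Icc 0 l) x) (Icc 0 l) x :=
    fun x hx => (hφ.differentiableOn one_ne_zero x hx).hasDerivWithinAt
  have hφ' : MemLp (derivWithin φ (Icc 0 l)) 2 (volume.restrict (Ioc 0 l)) :=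
    (hφ.continuousOn_derivWithin (uniqueDiffOn_Icc hl) le_rfl).memLp_restrict_Ioc 2
  have hbound (N : ℕ) := sum_abs_sineCoeff_le hl hderiv hφ' h0 hle (Finset.range N)
  exact ⟨summable_of_sum_range_le (fun _ => abs_nonneg _) hbound,
    tsum_le_of_sum_range_le (fun _ => abs_nonneg _) hbound⟩
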